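/- Let V be a real vector space of dimension r and Δ ⊂ V∖{0} a finite spanning subset with Δ = −Δ. Let γ be a chamber of V and p ∈ γ. Then for every basis σ of Δ, every α ∈ Δ∖σ with expansion α = Σ_{β∈σ} c_{αβ}β, the family A_γ(σ) := [C(σ)'_γ] satisfies the Orlik–Solomon relation A_γ(σ) ≡ Σ_{β∈σ, c_{αβ}≠0} sign(c_{αβ}) · A_γ(σ∪{α}∖{β}) modulo ℒ𝒞_Δ, i.e. these relations hold in the quotient group 𝒞_Δ/ℒ𝒞_Δ. -/

import Mathlib

noncomputable section
open scoped Classical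

namespace JK

variable {V : Type} [AddCommGroup V] [Module ℝ V] [FiniteDimensional ℝ V]

/-- The closed convex cone generated by the finite set `κ`. -/
def coneOf (κ : Finset V) : Set V :=
  {h | ∃ c : V → ℝ, (∀ v, 0 ≤ c v) ∧ h = ∑ v ∈ κ, c v • v}

/-- The characteristic function (with values in `ℤ`) of a set. -/
def charFun (A : Set V) : V → ℤ := fun h => if h ∈ A then 1 else 0

variable (V) in
/-- `𝒞_Δ`: the additive group of `ℤ`-valued functions on `V` generated by the
characteristic functions of the polyhedral cones `C(κ)`, `κ ⊆ Δ`. -/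
def Ccone (Δ : Finset V) : AddSubgroup (V → ℤ) :=
  AddSubgroup.closure {f | ∃ κ : Finset V, κ ⊆ Δ ∧ f = charFun (coneOf κ)}

variable (V) in
/-- `ℒ𝒞_Δ`: the subgroup of `𝒞_Δ` generated by the characteristic functions of the cones
`C(κ)` (`κ ⊆ Δ`) which contain a line. -/
def LCcone (Δ : Finset V) : AddSubgroup (V → ℤ) :=
  AddSubgroup.closure {f | ∃ κ : Finset V, κ ⊆ Δ ∧
    (∃ v : V, v ≠ 0 ∧ ∀ t : ℝ, t • v ∈ coneOf κ) ∧ f = charFun (coneOf κ)}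

/-- A wall: a hyperplane spanned by elements of `Δ`. -/
def IsWallV (Δ : Finset V) (Wl : Submodule ℝ V) : Prop :=
  (∃ s : Finset V, s ⊆ Δ ∧ Submodule.span ℝ (s : Set V) = Wl) ∧
  Module.finrank ℝ Wl = Module.finrank ℝ V - 1

/-- A regular point of `V`: a point on no wall. -/
def RegPtV (Δ : Finset V) (p : V) : Prop := ∀ Wl, IsWallV Δ Wl → p ∉ Wl

/-- `A_γ(σ) = [C(σ)'_γ]`, for the chamber `γ` containing the regular point `p`:
the characteristic function of
`C(σ)'_p = C(β : p_β > 0) + C(β : p_β < 0)⁰`, where `p = Σ_β p_β β` in the basis `σ`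
(`⁰` denoting the relative interior). -/
def Agamma (σ : Finset V) (p : V) : V → ℤ := fun h =>
  if ∃ c cp : V → ℝ, p = (∑ β ∈ σ, cp β • β) ∧ h = (∑ β ∈ σ, c β • β) ∧
      ∀ β ∈ σ, (0 < cp β → 0 ≤ c β) ∧ (cp β < 0 → 0 < c β)
  then 1 else 0

/-!
Put `τ = σ ∪ {α}`. Up to scaling, the only linear relation on `τ` is `α - ∑ c_β β = 0`; write `ℓ`
for its coefficients. The bases inside `τ` are the `τ ∖ {j}` with `ℓ_j ≠ 0`, and the left-hand side
of the Orlik–Solomon relation is `∑_{j ∈ τ} sign(ℓ_j) A_γ(τ ∖ {j})`. A point `h` lies in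
`C(τ ∖ {j})'_p` iff `z = h + ε(p - h)` lies in the open cone `C(τ ∖ {j})⁰` for small `ε > 0`, and
for small `ε` the point `z` is generic. A generic `z` lies in at most one of these open cones with
`ℓ_j > 0` and in at most one with `ℓ_j < 0`, and sliding its coordinates along `ℓ` turns one kind
into the other. So when `ℓ` takes both signs the sum vanishes. When `c ≤ 0` the sum is the
characteristic function of a locally closed cone containing the lines `ℝβ` with `c_β ≠ 0`, and
inclusion–exclusion over the faces where coordinates vanish writes it as a signed sum of cones
`C(κ)` that contain a line. The same inclusion–exclusion, applied to `A_γ(σ)` itself, shows that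
it lies in `𝒞_Δ`.
-/

open Finset Submodule Filter Topology

variable {E : Type} [AddCommGroup E] [Module ℝ E]

theorem exists_eq_sum_smul {b : Finset E} (hb : span ℝ (b : Set E) = ⊤) (z : E) :
    ∃ x : E → ℝ, z = ∑ v ∈ b, x v • v := by
  obtain ⟨x, -, hx⟩ := mem_span_finset.1 (hb ▸ mem_top : z ∈ span ℝ (b : Set E))
  exact ⟨x, hx.symm⟩

theorem eqOn_of_sum_smul_eq {b : Finset E} (hb : LinearIndepOn ℝ id (b : Set E))
    {x y : E → ℝ} (h : ∑ v ∈ b, x v • v = ∑ v ∈ b, y v • v) : ∀ v ∈ b, x v = y v :=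
  linearIndepOn_finset_iffₛ.1 hb x y h

theorem sum_smul_mem_span {b b' : Finset E} {x : E → ℝ} (h : ∀ v ∈ b, v ∉ b' → x v = 0) :
    ∑ v ∈ b, x v • v ∈ span ℝ (b' : Set E) :=
  sum_mem fun v hv => by
    by_cases hv' : v ∈ b'
    · exact smul_mem _ _ (subset_span hv')
    · simp [h v hv hv']

theorem sum_update_zero_smul (b : Finset E) (x : E → ℝ) (j : E) :
    ∑ v ∈ b, Function.update x j 0 v • v = ∑ v ∈ b.erase j, x v • v := by
  rw [← sum_erase b (f := fun v => Function.update x j 0 v • v) (a := j) (by simp)]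
  exact sum_congr rfl fun v hv => by rw [Function.update_of_ne (ne_of_mem_erase hv)]

theorem sum_smul_add_smul_sum {b : Finset E} (x y : E → ℝ) (t : ℝ) :
    ∑ v ∈ b, (x v + t * y v) • v = ∑ v ∈ b, x v • v + t • ∑ v ∈ b, y v • v := by
  simp only [add_smul, mul_smul, sum_add_distrib, smul_sum]

theorem neg_notMem_of_linearIndepOn {b : Finset E} (hb : LinearIndepOn ℝ id (b : Set E))
    {v : E} (hv : v ∈ b) : -v ∉ b := by
  intro hnv
  have hv0 : v ≠ 0 := hb.ne_zero hv
  have hne : v ≠ -v := fun h => smul_ne_zero (two_ne_zero (α := ℝ)) hv0 (by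
    rw [two_smul]; nth_rewrite 2 [h]; exact add_neg_cancel v)
  have hpair := (LinearIndepOn.pair_iff id hne).1
    (hb.mono (Set.insert_subset_iff.2 ⟨hv, Set.singleton_subset_iff.2 hnv⟩)) 1 1 (by simp)
  exact one_ne_zero hpair.1

def openConeOn (b s : Finset E) : Set E :=
  {z | ∃ x : E → ℝ, z = ∑ v ∈ b, x v • v ∧ ∀ v ∈ s, 0 < x v}

abbrev openCone (b : Finset E) : Set E := openConeOn b b

def primedCone (b : Finset E) (p : E) : Set E :=
  {h | ∃ c cp : E → ℝ, p = ∑ β ∈ b, cp β • β ∧ h = ∑ β ∈ b, c β • β ∧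
      ∀ β ∈ b, (0 < cp β → 0 ≤ c β) ∧ (cp β < 0 → 0 < c β)}

def locClosedCone (b Z N : Finset E) : Set E :=
  {h | ∃ a : E → ℝ, h = ∑ v ∈ b, a v • v ∧ (∀ v ∈ Z, 0 ≤ a v) ∧ ∀ v ∈ N, 0 < a v}

theorem charFun_apply_eq_of_iff {G : Type} {A B : Set G} {x y : G} (h : x ∈ A ↔ y ∈ B) :
    charFun A x = charFun B y :=
  if_congr h rfl rfl

theorem Agamma_eq_charFun (b : Finset E) (p : E) : Agamma b p = charFun (primedCone b p) := rfl

section Coordinates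

variable {b : Finset E} (hb : LinearIndepOn ℝ id (b : Set E))
include hb

theorem mem_openConeOn_iff {s : Finset E} (hs : s ⊆ b) {x : E → ℝ} {z : E}
    (hz : z = ∑ v ∈ b, x v • v) : z ∈ openConeOn b s ↔ ∀ v ∈ s, 0 < x v := by
  refine ⟨fun ⟨y, hy, hpos⟩ v hv => ?_, fun hpos => ⟨x, hz, hpos⟩⟩
  rw [eqOn_of_sum_smul_eq hb (hz.symm.trans hy) v (hs hv)]
  exact hpos v hv

theorem mem_locClosedCone_iff {Z N : Finset E} (hZ : Z ⊆ b) (hN : N ⊆ b) {a : E → ℝ} {h : E}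
    (hh : h = ∑ v ∈ b, a v • v) :
    h ∈ locClosedCone b Z N ↔ (∀ v ∈ Z, 0 ≤ a v) ∧ ∀ v ∈ N, 0 < a v := by
  refine ⟨fun ⟨a', ha', hZ', hN'⟩ => ?_, fun h' => ⟨a, hh, h'⟩⟩
  have heq := eqOn_of_sum_smul_eq hb (hh.symm.trans ha')
  exact ⟨fun v hv => heq v (hZ hv) ▸ hZ' v hv, fun v hv => heq v (hN hv) ▸ hN' v hv⟩

theorem mem_primedCone_iff {a q : E → ℝ} {p h : E} (hh : h = ∑ v ∈ b, a v • v)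
    (hp : p = ∑ v ∈ b, q v • v) (hq : ∀ v ∈ b, q v ≠ 0) :
    h ∈ primedCone b p ↔ ∀ v ∈ b, 0 ≤ a v ∧ (q v < 0 → 0 < a v) := by
  constructor
  · rintro ⟨a', q', hp', hh', hsign⟩ v hv
    have hqv := eqOn_of_sum_smul_eq hb (hp.symm.trans hp') v hv
    rw [eqOn_of_sum_smul_eq hb (hh.symm.trans hh') v hv, hqv]
    rcases (hqv ▸ hq v hv).lt_or_gt with hneg | hpos
    · exact ⟨((hsign v hv).2 hneg).le, fun _ => (hsign v hv).2 hneg⟩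
    · exact ⟨(hsign v hv).1 hpos, fun hneg => absurd hneg hpos.not_gt⟩
  · exact fun hsign => ⟨a, q, hp, hh, fun v hv => ⟨fun _ => (hsign v hv).1, (hsign v hv).2⟩⟩

theorem mem_locClosedCone_filter_iff {Z : Finset E} (hZ : Z ⊆ b) {a q : E → ℝ} {h : E}
    (hh : h = ∑ v ∈ b, a v • v) :
    h ∈ locClosedCone b Z (Z.filter (q · < 0)) ↔ ∀ v ∈ Z, 0 ≤ a v ∧ (q v < 0 → 0 < a v) := by
  rw [mem_locClosedCone_iff hb hZ ((filter_subset _ _).trans hZ) hh]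
  simp only [mem_filter, and_imp]
  exact ⟨fun h v hv => ⟨h.1 v hv, h.2 v hv⟩,
    fun h => ⟨fun v hv => (h v hv).1, fun v hv => (h v hv).2⟩⟩

theorem primedCone_eq_locClosedCone {q : E → ℝ} {p : E} (hbs : span ℝ (b : Set E) = ⊤)
    (hp : p = ∑ v ∈ b, q v • v) (hq : ∀ v ∈ b, q v ≠ 0) :
    primedCone b p = locClosedCone b b (b.filter (q · < 0)) := by
  ext h
  obtain ⟨a, ha⟩ := exists_eq_sum_smul hbs h
  rw [mem_primedCone_iff hb ha hp hq, mem_locClosedCone_filter_iff hb subset_rfl ha]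

end Coordinates

theorem smul_mem_coneOf {κ : Finset E} {w : E} (hw : w ∈ κ) (hnw : -w ∈ κ) (t : ℝ) :
    t • w ∈ coneOf κ := by
  refine ⟨fun v => (if v = w then max t 0 else 0) + (if v = -w then max (-t) 0 else 0),
    fun v => by positivity, ?_⟩
  simp only [add_smul, ite_smul, zero_smul, sum_add_distrib, sum_ite_eq', hw, hnw, if_true,
    smul_neg, ← sub_eq_add_neg, ← sub_smul, max_zero_sub_eq_self]

theorem sum_powerset_neg_one_pow_mul_ite {ι : Type*} [DecidableEq ι] (N : Finset ι)
    (P : ι → Prop) [DecidablePred P] :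
    ∑ T ∈ N.powerset, (-1 : ℤ) ^ #T * (if ∀ v ∈ T, P v then 1 else 0) =
      if ∀ v ∈ N, ¬ P v then 1 else 0 := by
  have hfilter : N.powerset.filter (fun T => ∀ v ∈ T, P v) = (N.filter P).powerset := by
    ext T
    simp only [mem_filter, mem_powerset, subset_iff]
    grind
  simp only [mul_boole]
  rw [← sum_filter, hfilter, sum_powerset_neg_one_pow_card]
  exact if_congr filter_eq_empty_iff rfl rfl

theorem sdiff_union_image_neg_subset {G : Type*} [Neg G] {b Δ : Finset G} (hbΔ : b ⊆ Δ)
    (hsym : ∀ v ∈ Δ, -v ∈ Δ) (T Z : Finset G) : (b \ T) ∪ (b \ Z).image Neg.neg ⊆ Δ := by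
  intro w hw
  rcases mem_union.1 hw with hw | hw
  · exact hbΔ (mem_sdiff.1 hw).1
  · obtain ⟨v, hv, rfl⟩ := mem_image.1 hw
    exact hsym v (hbΔ (mem_sdiff.1 hv).1)

section Cones

variable {b : Finset E} (hb : LinearIndepOn ℝ id (b : Set E))
include hb

theorem sum_sdiff_union_image_neg_smul (T Z : Finset E) (cf : E → ℝ) :
    ∑ w ∈ (b \ T) ∪ (b \ Z).image Neg.neg, cf w • w =
      ∑ v ∈ b, ((if v ∈ T then 0 else cf v) - (if v ∈ Z then 0 else cf (-v))) • v := by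
  have hdisj : Disjoint (b \ T) ((b \ Z).image Neg.neg) := disjoint_left.2 fun w hw hw' => by
    obtain ⟨v, hv, rfl⟩ := mem_image.1 hw'
    exact neg_notMem_of_linearIndepOn hb (mem_sdiff.1 hv).1 (mem_sdiff.1 hw).1
  rw [sum_union hdisj, sum_image neg_injective.injOn, sdiff_eq_filter, sdiff_eq_filter,
    sum_filter, sum_filter, ← sum_add_distrib]
  refine sum_congr rfl fun v _ => ?_
  split_ifs <;> simp [← sub_eq_add_neg, sub_smul]

theorem mem_coneOf_sdiff_union_image_neg_iff {T Z : Finset E} (hTZ : T ⊆ Z) (hZ : Z ⊆ b)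
    {a : E → ℝ} {h : E} (hh : h = ∑ v ∈ b, a v • v) :
    h ∈ coneOf ((b \ T) ∪ (b \ Z).image Neg.neg) ↔ (∀ v ∈ Z, 0 ≤ a v) ∧ ∀ v ∈ T, a v = 0 := by
  constructor
  · rintro ⟨cf, hcf, hsum⟩
    rw [sum_sdiff_union_image_neg_smul hb] at hsum
    have heq := eqOn_of_sum_smul_eq hb (hh.symm.trans hsum)
    refine ⟨fun v hv => ?_, fun v hv => ?_⟩
    · rw [heq v (hZ hv), if_pos hv, sub_zero]
      split_ifs
      exacts [le_rfl, hcf v]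
    · rw [heq v (hZ (hTZ hv)), if_pos hv, if_pos (hTZ hv), sub_zero]
  · rintro ⟨hnonneg, hzero⟩
    refine ⟨fun w => if w ∈ b then max (a w) 0 else max (-a (-w)) 0,
      fun w => by dsimp only; split_ifs <;> positivity, ?_⟩
    rw [sum_sdiff_union_image_neg_smul hb, hh]
    refine sum_congr rfl fun v hv => ?_
    rw [if_pos hv, if_neg (neg_notMem_of_linearIndepOn hb hv), neg_neg]
    by_cases hvZ : v ∈ Z
    · by_cases hvT : v ∈ T
      · simp [hvT, hvZ, hzero v hvT]
      · simp [hvT, hvZ, max_eq_left (hnonneg v hvZ)]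
    · rw [if_neg hvZ, if_neg fun hvT => hvZ (hTZ hvT), max_zero_sub_eq_self]

theorem charFun_locClosedCone_eq_sum (hbs : span ℝ (b : Set E) = ⊤) {Z N : Finset E}
    (hZ : Z ⊆ b) (hN : N ⊆ Z) :
    charFun (locClosedCone b Z N) = ∑ T ∈ N.powerset,
      (-1 : ℤ) ^ #T • charFun (coneOf ((b \ T) ∪ (b \ Z).image Neg.neg)) := by
  funext h
  obtain ⟨a, ha⟩ := exists_eq_sum_smul hbs h
  have hcone : ∀ T ∈ N.powerset, charFun (coneOf ((b \ T) ∪ (b \ Z).image Neg.neg)) h =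
      (if ∀ v ∈ Z, 0 ≤ a v then 1 else 0) * (if ∀ v ∈ T, a v = 0 then 1 else 0) := fun T hT => by
    rw [charFun, ite_zero_mul_ite_zero, mul_one]
    exact if_congr (mem_coneOf_sdiff_union_image_neg_iff hb ((mem_powerset.1 hT).trans hN) hZ ha)
      rfl rfl
  simp only [Finset.sum_apply, Pi.smul_apply, smul_eq_mul]
  rw [sum_congr rfl fun T hT => by rw [hcone T hT, mul_left_comm], ← mul_sum,
    sum_powerset_neg_one_pow_mul_ite, charFun, ite_zero_mul_ite_zero, mul_one]
  refine if_congr ?_ rfl rfl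
  rw [mem_locClosedCone_iff hb hZ (hN.trans hZ) ha]
  exact and_congr_right fun hnonneg => forall₂_congr fun v hv =>
    ⟨ne_of_gt, (hnonneg v (hN hv)).lt_of_ne'⟩

variable (hbs : span ℝ (b : Set E) = ⊤) {Z N Δ : Finset E} (hZ : Z ⊆ b) (hN : N ⊆ Z)
  (hbΔ : b ⊆ Δ) (hsym : ∀ v ∈ Δ, -v ∈ Δ)
include hbs hZ hN hbΔ hsym

theorem charFun_locClosedCone_mem_Ccone : charFun (locClosedCone b Z N) ∈ Ccone E Δ := by
  rw [charFun_locClosedCone_eq_sum hb hbs hZ hN, Ccone]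
  refine AddSubgroup.sum_mem _ fun T _ => AddSubgroup.zsmul_mem _
    (AddSubgroup.subset_closure ?_) _
  exact ⟨_, sdiff_union_image_neg_subset hbΔ hsym T Z, rfl⟩

theorem charFun_locClosedCone_mem_LCcone {β : E} (hβ : β ∈ b) (hβZ : β ∉ Z) :
    charFun (locClosedCone b Z N) ∈ LCcone E Δ := by
  rw [charFun_locClosedCone_eq_sum hb hbs hZ hN, LCcone]
  refine AddSubgroup.sum_mem _ fun T hT => AddSubgroup.zsmul_mem _
    (AddSubgroup.subset_closure ?_) _
  refine ⟨_, sdiff_union_image_neg_subset hbΔ hsym T Z,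
    ⟨β, hb.ne_zero hβ, smul_mem_coneOf ?_ ?_⟩, rfl⟩
  · exact mem_union_left _ (mem_sdiff.2 ⟨hβ, fun hβT => hβZ (hN (mem_powerset.1 hT hβT))⟩)
  · exact mem_union_right _ (mem_image_of_mem _ (mem_sdiff.2 ⟨hβ, hβZ⟩))

end Cones

theorem eventually_pos_lineMap_iff {a q : ℝ} (hq : q ≠ 0) :
    ∀ᶠ ε in 𝓝[>] (0 : ℝ), (0 < (1 - ε) * a + ε * q ↔ 0 ≤ a ∧ (q < 0 → 0 < a)) := by
  have hlim : Tendsto (fun ε : ℝ => (1 - ε) * a + ε * q) (𝓝[>] 0) (𝓝 a) := by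
    have hcont : Continuous (fun ε : ℝ => (1 - ε) * a + ε * q) := by fun_prop
    simpa using (hcont.tendsto 0).mono_left nhdsWithin_le_nhds
  rcases lt_trichotomy a 0 with ha | rfl | ha
  · filter_upwards [hlim.eventually (gt_mem_nhds ha)] with ε hε
    exact iff_of_false hε.not_gt fun h => ha.not_ge h.1
  · filter_upwards [self_mem_nhdsWithin] with ε (hε : 0 < ε)
    rcases hq.lt_or_gt with hq | hq
    · simp [hq, (mul_neg_of_pos_of_neg hε hq).not_gt]
    · simp [hq.not_gt, mul_pos hε hq]
  · filter_upwards [hlim.eventually (lt_mem_nhds ha)] with ε hε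
    exact iff_of_true hε ⟨ha.le, fun _ => ha⟩

theorem eventually_add_smul_sub_notMem {W : Submodule ℝ E} {p : E} (hp : p ∉ W) (h : E) :
    ∀ᶠ ε in 𝓝[>] (0 : ℝ), h + ε • (p - h) ∉ W := by
  have hunique : ∀ ε ε' : ℝ, h + ε • (p - h) ∈ W → h + ε' • (p - h) ∈ W → ε = ε' := by
    intro ε ε' hε hε'
    by_contra hne
    have hd : p - h ∈ W := by
      have := W.sub_mem hε hε'
      rwa [add_sub_add_left_eq_sub, ← sub_smul, W.smul_mem_iff (sub_ne_zero.2 hne)] at this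
    exact hp (by simpa using W.add_mem (W.sub_mem hε (W.smul_mem ε hd)) hd)
  by_cases hbad : ∃ ε₀ : ℝ, 0 < ε₀ ∧ h + ε₀ • (p - h) ∈ W
  · obtain ⟨ε₀, hε₀, hmem⟩ := hbad
    filter_upwards [Ioo_mem_nhdsGT hε₀] with ε hε hmem'
    exact hε.2.ne (hunique ε ε₀ hmem' hmem)
  · filter_upwards [self_mem_nhdsWithin] with ε (hε : 0 < ε) hmem using hbad ⟨ε, hε, hmem⟩

section Segment

variable {b : Finset E} (hb : LinearIndepOn ℝ id (b : Set E))
include hb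

theorem eventually_mem_openConeOn_iff {s : Finset E} (hs : s ⊆ b) {a q : E → ℝ} {h p : E}
    (hh : h = ∑ v ∈ b, a v • v) (hp : p = ∑ v ∈ b, q v • v) (hq : ∀ v ∈ s, q v ≠ 0) :
    ∀ᶠ ε in 𝓝[>] (0 : ℝ),
      (h + ε • (p - h) ∈ openConeOn b s ↔ ∀ v ∈ s, 0 ≤ a v ∧ (q v < 0 → 0 < a v)) := by
  have hrep : ∀ ε : ℝ, h + ε • (p - h) = ∑ v ∈ b, ((1 - ε) * a v + ε * q v) • v := fun ε => by
    simp only [add_smul, mul_smul, sum_add_distrib, ← smul_sum, ← hh, ← hp]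
    module
  filter_upwards [(eventually_all_finset s).2 fun v hv => eventually_pos_lineMap_iff (a := a v)
    (hq v hv)] with ε hε
  rw [mem_openConeOn_iff hb hs (hrep ε)]
  exact forall₂_congr hε

theorem eventually_mem_openCone_iff_mem_primedCone (hbs : span ℝ (b : Set E) = ⊤) {q : E → ℝ}
    {p : E} (hp : p = ∑ v ∈ b, q v • v) (hq : ∀ v ∈ b, q v ≠ 0) (h : E) :
    ∀ᶠ ε in 𝓝[>] (0 : ℝ), (h + ε • (p - h) ∈ openCone b ↔ h ∈ primedCone b p) := by
  obtain ⟨a, ha⟩ := exists_eq_sum_smul hbs h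
  rw [mem_primedCone_iff hb ha hp hq]
  exact eventually_mem_openConeOn_iff hb subset_rfl ha hp hq

end Segment

def IsCircuitRelation (τ : Finset E) (ℓ : E → ℝ) : Prop :=
  ∑ v ∈ τ, ℓ v • v = 0 ∧ ∀ μ : E → ℝ, ∑ v ∈ τ, μ v • v = 0 → ∃ t : ℝ, ∀ v ∈ τ, μ v = t * ℓ v

def IsGeneric (τ : Finset E) (ℓ : E → ℝ) (z : E) : Prop :=
  ∀ v ∈ τ, ℓ v ≠ 0 → ∀ w ∈ τ, w ≠ v → z ∉ span ℝ (((τ.erase v).erase w : Finset E) : Set E)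

section Circuit

variable {τ : Finset E} {ℓ : E → ℝ} {z : E}

theorem isGeneric_neg : IsGeneric τ (-ℓ) z ↔ IsGeneric τ ℓ z := by
  simp [IsGeneric]

theorem IsGeneric.coeff_ne_zero (hz : IsGeneric τ ℓ z) {j : E} (hj : j ∈ τ) (hℓj : ℓ j ≠ 0)
    {q : E → ℝ} (hq : z = ∑ v ∈ τ.erase j, q v • v) : ∀ v ∈ τ.erase j, q v ≠ 0 := by
  intro v hv hqv
  refine hz j hj hℓj v (mem_of_mem_erase hv) (ne_of_mem_erase hv) (hq ▸ sum_smul_mem_span ?_)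
  intro w hw hw'
  obtain rfl : w = v := by_contra fun hne => hw' (mem_erase.2 ⟨hne, hw⟩)
  exact hqv

theorem IsGeneric.eventually_add_smul_sub {p : E} (hp : IsGeneric τ ℓ p) (h : E) :
    ∀ᶠ ε in 𝓝[>] (0 : ℝ), IsGeneric τ ℓ (h + ε • (p - h)) := by
  simp only [IsGeneric, eventually_all_finset, eventually_imp_distrib_left]
  exact fun v hv hℓv w hw hwv => eventually_add_smul_sub_notMem (hp v hv hℓv w hw hwv) h

namespace IsCircuitRelation

variable (hℓ : IsCircuitRelation τ ℓ)
include hℓ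

theorem linearIndepOn_erase {j : E} (hj : j ∈ τ) (hℓj : ℓ j ≠ 0) :
    LinearIndepOn ℝ id (τ.erase j : Set E) := by
  refine linearIndepOn_finset_iff.2 fun f hf v hv => ?_
  obtain ⟨t, ht⟩ := hℓ.2 (Function.update f j 0) (by rw [sum_update_zero_smul]; exact hf)
  have ht0 : t = 0 := by simpa [hℓj] using (ht j hj).symm
  simpa [ht0, Function.update_of_ne (ne_of_mem_erase hv)] using ht v (mem_of_mem_erase hv)

theorem span_erase (hτ : span ℝ (τ : Set E) = ⊤) {j : E} (hj : j ∈ τ) (hℓj : ℓ j ≠ 0) :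
    span ℝ (τ.erase j : Set E) = ⊤ := by
  have hjmem : j ∈ span ℝ (τ.erase j : Set E) := by
    have hrel := hℓ.1
    rw [← add_sum_erase τ _ hj] at hrel
    refine (smul_mem_iff _ hℓj).1 ?_
    rw [eq_neg_of_add_eq_zero_left hrel]
    exact neg_mem (sum_smul_mem_span fun v hv hv' => absurd hv hv')
  rw [← hτ]
  conv_rhs => rw [← insert_erase hj]
  rw [coe_insert, span_insert_eq_span hjmem]

/-- Two representations of `z` in the bases `τ \ {j}` and `τ \ {k}` differ by a multiple of the
relation `ℓ`, whose coefficients at `j` and `k` then have opposite signs. -/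
theorem eq_of_mem_openCone_erase {j k : E} (hj : j ∈ τ) (hk : k ∈ τ) (hjk : 0 < ℓ j * ℓ k)
    (hzj : z ∈ openCone (τ.erase j)) (hzk : z ∈ openCone (τ.erase k)) : j = k := by
  by_contra hne
  obtain ⟨x, hx, hxpos⟩ := hzj
  obtain ⟨y, hy, hypos⟩ := hzk
  obtain ⟨t, ht⟩ := hℓ.2 (Function.update x j 0 - Function.update y k 0) (by
    simp only [Pi.sub_apply, sub_smul, sum_sub_distrib, sum_update_zero_smul, ← hx, ← hy,
      sub_self])
  have htj := ht j hj
  have htk := ht k hk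
  simp only [Pi.sub_apply, Function.update_self, Function.update_of_ne hne,
    Function.update_of_ne (Ne.symm hne)] at htj htk
  have hyj := hypos j (mem_erase.2 ⟨hne, hj⟩)
  have hxk := hxpos k (mem_erase.2 ⟨Ne.symm hne, hk⟩)
  nlinarith [mul_nonneg (mul_self_nonneg t) hjk.le]

end IsCircuitRelation

end Circuit

section Exchange

variable {τ : Finset E} {ℓ : E → ℝ} {z : E}

/-- Moving `z = ∑ y_v v` along the relation `ℓ` until the first coordinate with `ℓ_k < 0`
vanishes; genericity keeps all other coordinates positive. -/
theorem exists_mem_openCone_erase_of_neg (hrel : ∑ v ∈ τ, ℓ v • v = 0) (hz : IsGeneric τ ℓ z)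
    {y : E → ℝ} (hzy : z = ∑ v ∈ τ, y v • v) (hy : ∀ v ∈ τ, 0 ≤ y v)
    (hy' : ∀ v ∈ τ, ℓ v ≤ 0 → 0 < y v) {k₁ : E} (hk₁ : k₁ ∈ τ) (hℓk₁ : ℓ k₁ < 0) :
    ∃ k ∈ τ, ℓ k < 0 ∧ z ∈ openCone (τ.erase k) := by
  obtain ⟨k, hk, hmin⟩ := exists_min_image (τ.filter (ℓ · < 0)) (fun v => y v / -ℓ v)
    ⟨k₁, mem_filter.2 ⟨hk₁, hℓk₁⟩⟩
  obtain ⟨hkτ, hℓk⟩ := mem_filter.1 hk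
  set t := y k / -ℓ k
  have ht : 0 < t := div_pos (hy' k hkτ hℓk.le) (neg_pos.2 hℓk)
  set ν : E → ℝ := fun v => y v + t * ℓ v
  have hzν : z = ∑ v ∈ τ, ν v • v := by rw [sum_smul_add_smul_sum, hrel, smul_zero, add_zero, hzy]
  have hνk : ν k = 0 := by
    simp only [ν, t]
    field_simp [hℓk.ne]
    ring
  have hν : ∀ v ∈ τ, 0 ≤ ν v := by
    intro v hv
    rcases lt_or_ge (ℓ v) 0 with hℓv | hℓv
    · have := (le_div_iff₀ (neg_pos.2 hℓv)).1 (hmin v (mem_filter.2 ⟨hv, hℓv⟩))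
      simp only [ν]
      linarith
    · exact add_nonneg (hy v hv) (mul_nonneg ht.le hℓv)
  refine ⟨k, hkτ, hℓk, ν, by rw [hzν, sum_erase _ (by simp [hνk])], fun v hv => ?_⟩
  refine (hν v (mem_of_mem_erase hv)).lt_of_ne' fun hν0 => hz k hkτ hℓk.ne v
    (mem_of_mem_erase hv) (ne_of_mem_erase hv) (hzν ▸ sum_smul_mem_span fun w hw hw' => ?_)
  have hwkv : w = k ∨ w = v := by
    by_contra! hwkv
    exact hw' (mem_erase.2 ⟨hwkv.2, mem_erase.2 ⟨hwkv.1, hw⟩⟩)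
  rcases hwkv with rfl | rfl
  exacts [hνk, hν0]

theorem exists_neg_of_pos (hrel : ∑ v ∈ τ, ℓ v • v = 0) (hz : IsGeneric τ ℓ z) {j k : E}
    (hj : j ∈ τ) (hℓj : 0 < ℓ j) (hzj : z ∈ openCone (τ.erase j)) (hk : k ∈ τ) (hℓk : ℓ k < 0) :
    ∃ k ∈ τ, ℓ k < 0 ∧ z ∈ openCone (τ.erase k) := by
  obtain ⟨x, hx, hxpos⟩ := hzj
  refine exists_mem_openCone_erase_of_neg hrel hz (y := Function.update x j 0)
    (by rw [sum_update_zero_smul, hx]) (fun v hv => ?_) (fun v hv hℓv => ?_) hk hℓk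
  · by_cases hvj : v = j
    · simp [hvj]
    · rw [Function.update_of_ne hvj]
      exact (hxpos v (mem_erase.2 ⟨hvj, hv⟩)).le
  · have hvj : v ≠ j := by rintro rfl; linarith
    rw [Function.update_of_ne hvj]
    exact hxpos v (mem_erase.2 ⟨hvj, hv⟩)

end Exchange

theorem sum_boole_eq_ite_exists {ι : Type*} (s : Finset ι) (P : ι → Prop) [DecidablePred P]
    (hP : ∀ i ∈ s, ∀ j ∈ s, P i → P j → i = j) :
    ∑ i ∈ s, (if P i then 1 else 0 : ℤ) = if ∃ i ∈ s, P i then 1 else 0 := by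
  rw [sum_boole]
  split_ifs with hex
  · obtain ⟨i, hi, hPi⟩ := hex
    have hle : #(s.filter P) ≤ 1 := card_le_one.2 fun i hi j hj =>
      hP i (mem_filter.1 hi).1 j (mem_filter.1 hj).1 (mem_filter.1 hi).2 (mem_filter.1 hj).2
    have hpos : 0 < #(s.filter P) := card_pos.2 ⟨i, mem_filter.2 ⟨hi, hPi⟩⟩
    rw [show #(s.filter P) = 1 by omega, Nat.cast_one]
  · rw [filter_eq_empty_iff.2 fun i hi hPi => hex ⟨i, hi, hPi⟩, card_empty, Nat.cast_zero]

section CircuitSum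

variable {τ : Finset E} {ℓ : E → ℝ} {z : E}

theorem IsCircuitRelation.sum_sign_mul_charFun_openCone (hℓ : IsCircuitRelation τ ℓ) (z : E) :
    ∑ j ∈ τ, (SignType.sign (ℓ j) : ℤ) * charFun (openCone (τ.erase j)) z =
      (if ∃ j ∈ τ, 0 < ℓ j ∧ z ∈ openCone (τ.erase j) then 1 else 0) -
        (if ∃ j ∈ τ, ℓ j < 0 ∧ z ∈ openCone (τ.erase j) then 1 else 0) := by
  have hsplit : ∀ j, (SignType.sign (ℓ j) : ℤ) * charFun (openCone (τ.erase j)) z =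
      (if 0 < ℓ j ∧ z ∈ openCone (τ.erase j) then 1 else 0) -
        (if ℓ j < 0 ∧ z ∈ openCone (τ.erase j) then 1 else 0) := fun j => by
    by_cases hz : z ∈ openCone (τ.erase j) <;> rcases lt_trichotomy (ℓ j) 0 with h | h | h <;>
      simp [charFun, hz, h, not_lt.2 h.le]
  rw [sum_congr rfl fun j _ => hsplit j, sum_sub_distrib,
    sum_boole_eq_ite_exists _ _ fun j hj k hk hzj hzk =>
      hℓ.eq_of_mem_openCone_erase hj hk (mul_pos hzj.1 hzk.1) hzj.2 hzk.2,
    sum_boole_eq_ite_exists _ _ fun j hj k hk hzj hzk =>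
      hℓ.eq_of_mem_openCone_erase hj hk (mul_pos_of_neg_of_neg hzj.1 hzk.1) hzj.2 hzk.2]

theorem IsCircuitRelation.sum_sign_mul_charFun_openCone_eq_zero (hℓ : IsCircuitRelation τ ℓ)
    (hz : IsGeneric τ ℓ z) (hpos : ∃ j ∈ τ, 0 < ℓ j) (hneg : ∃ k ∈ τ, ℓ k < 0) :
    ∑ j ∈ τ, (SignType.sign (ℓ j) : ℤ) * charFun (openCone (τ.erase j)) z = 0 := by
  obtain ⟨j₁, hj₁, hℓj₁⟩ := hpos
  obtain ⟨k₁, hk₁, hℓk₁⟩ := hneg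
  rw [hℓ.sum_sign_mul_charFun_openCone, sub_eq_zero]
  refine if_congr ⟨fun ⟨j, hj, hℓj, hzj⟩ => exists_neg_of_pos hℓ.1 hz hj hℓj hzj hk₁ hℓk₁,
    fun ⟨k, hk, hℓk, hzk⟩ => ?_⟩ rfl rfl
  obtain ⟨j, hj, hℓj, hzj⟩ := exists_neg_of_pos (by simp [neg_smul, hℓ.1]) (isGeneric_neg.2 hz) hk
    (neg_pos.2 hℓk) hzk hj₁ (neg_lt_zero.2 hℓj₁)
  exact ⟨j, hj, neg_lt_zero.1 hℓj, hzj⟩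

theorem mem_openConeOn_erase_of_mem_openCone_erase (hrel : ∑ v ∈ τ, ℓ v • v = 0) {j j₀ : E}
    (hℓj : 0 < ℓ j) (hzj : z ∈ openCone (τ.erase j)) (hℓj₀ : ℓ j₀ ≠ 0) :
    z ∈ openConeOn (τ.erase j₀) (τ.filter (ℓ · = 0)) := by
  obtain ⟨x, hx, hxpos⟩ := hzj
  set y := Function.update x j 0
  refine ⟨fun v => y v + -(y j₀ / ℓ j₀) * ℓ v, ?_, fun v hv => ?_⟩
  · have hj₀ : (y j₀ + -(y j₀ / ℓ j₀) * ℓ j₀) • j₀ = 0 := by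
      rw [neg_mul, div_mul_cancel₀ _ hℓj₀, add_neg_cancel, zero_smul]
    rw [sum_erase _ (f := fun v => (y v + -(y j₀ / ℓ j₀) * ℓ v) • v) hj₀, sum_smul_add_smul_sum,
      hrel, smul_zero, add_zero, sum_update_zero_smul, hx]
  · obtain ⟨hvτ, hℓv⟩ := mem_filter.1 hv
    have hvj : v ≠ j := by rintro rfl; linarith
    simp only [hℓv, mul_zero, add_zero, y, Function.update_of_ne hvj]
    exact hxpos v (mem_erase.2 ⟨hvj, hvτ⟩)

/-- Far out along `ℓ` every coordinate of `z` is positive; moving back along `ℓ` then stops at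
a basis `τ ∖ {j}` with `ℓ_j > 0`. -/
theorem exists_mem_openCone_erase_of_mem_openConeOn (hrel : ∑ v ∈ τ, ℓ v • v = 0)
    (hz : IsGeneric τ ℓ z) (hnonneg : ∀ v ∈ τ, 0 ≤ ℓ v) {j₀ : E} (hj₀ : j₀ ∈ τ)
    (hℓj₀ : 0 < ℓ j₀) (hz₀ : z ∈ openConeOn (τ.erase j₀) (τ.filter (ℓ · = 0))) :
    ∃ j ∈ τ, 0 < ℓ j ∧ z ∈ openCone (τ.erase j) := by
  obtain ⟨x, hx, hxpos⟩ := hz₀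
  set y := Function.update x j₀ 0
  have hlarge : ∀ᶠ t in atTop, ∀ v ∈ τ, 0 < ℓ v → 0 < y v + t * ℓ v := by
    refine (eventually_all_finset τ).2 fun v _ => eventually_imp_distrib_left.2 fun hℓv => ?_
    filter_upwards [eventually_gt_atTop (-y v / ℓ v)] with t ht
    rw [div_lt_iff₀ hℓv] at ht
    linarith
  obtain ⟨t, ht⟩ := hlarge.exists
  have hpos : ∀ v ∈ τ, 0 < y v + t * ℓ v := by
    intro v hv
    rcases (hnonneg v hv).lt_or_eq with hℓv | hℓv
    · exact ht v hv hℓv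
    · have hvj₀ : v ≠ j₀ := by rintro rfl; linarith
      simp only [← hℓv, mul_zero, add_zero, y, Function.update_of_ne hvj₀]
      exact hxpos v (mem_filter.2 ⟨hv, hℓv.symm⟩)
  obtain ⟨j, hj, hℓj, hzj⟩ := exists_mem_openCone_erase_of_neg (ℓ := -ℓ)
    (y := fun v => y v + t * ℓ v) (by simp [neg_smul, hrel]) (isGeneric_neg.2 hz)
    (by rw [sum_smul_add_smul_sum, hrel, smul_zero, add_zero, sum_update_zero_smul, hx])
    (fun v hv => (hpos v hv).le) (fun v hv _ => hpos v hv) hj₀ (neg_lt_zero.2 hℓj₀)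
  exact ⟨j, hj, neg_lt_zero.1 hℓj, hzj⟩

theorem IsCircuitRelation.sum_sign_mul_charFun_openCone_eq_charFun (hℓ : IsCircuitRelation τ ℓ)
    (hz : IsGeneric τ ℓ z) (hnonneg : ∀ v ∈ τ, 0 ≤ ℓ v) {j₀ : E} (hj₀ : j₀ ∈ τ)
    (hℓj₀ : 0 < ℓ j₀) :
    ∑ j ∈ τ, (SignType.sign (ℓ j) : ℤ) * charFun (openCone (τ.erase j)) z =
      charFun (openConeOn (τ.erase j₀) (τ.filter (ℓ · = 0))) z := by
  have hneg : ¬ ∃ k ∈ τ, ℓ k < 0 ∧ z ∈ openCone (τ.erase k) :=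
    fun ⟨k, hk, hℓk, _⟩ => (hnonneg k hk).not_gt hℓk
  rw [hℓ.sum_sign_mul_charFun_openCone, if_neg hneg, sub_zero]
  exact if_congr ⟨fun ⟨j, _, hℓj, hzj⟩ => mem_openConeOn_erase_of_mem_openCone_erase hℓ.1 hℓj hzj
    hℓj₀.ne', exists_mem_openCone_erase_of_mem_openConeOn hℓ.1 hz hnonneg hj₀ hℓj₀⟩ rfl rfl

end CircuitSum

section Agamma

variable {τ : Finset E} {ℓ : E → ℝ} {p : E} (hℓ : IsCircuitRelation τ ℓ)
  (hτ : span ℝ (τ : Set E) = ⊤) (hp : IsGeneric τ ℓ p)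
include hℓ hτ hp

theorem IsCircuitRelation.eventually_sum_sign_smul_Agamma_apply (h : E) :
    ∀ᶠ ε in 𝓝[>] (0 : ℝ), (∑ j ∈ τ, (SignType.sign (ℓ j) : ℤ) • Agamma (τ.erase j) p) h =
      ∑ j ∈ τ, (SignType.sign (ℓ j) : ℤ) * charFun (openCone (τ.erase j)) (h + ε • (p - h)) := by
  have hiff : ∀ᶠ ε in 𝓝[>] (0 : ℝ), ∀ j ∈ τ, ℓ j ≠ 0 →
      (h + ε • (p - h) ∈ openCone (τ.erase j) ↔ h ∈ primedCone (τ.erase j) p) := by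
    refine (eventually_all_finset τ).2 fun j hj => eventually_imp_distrib_left.2 fun hℓj => ?_
    obtain ⟨q, hq⟩ := exists_eq_sum_smul (hℓ.span_erase hτ hj hℓj) p
    exact eventually_mem_openCone_iff_mem_primedCone (hℓ.linearIndepOn_erase hj hℓj)
      (hℓ.span_erase hτ hj hℓj) hq (hp.coeff_ne_zero hj hℓj hq) h
  filter_upwards [hiff] with ε hε
  simp only [Finset.sum_apply, Pi.smul_apply, smul_eq_mul, Agamma_eq_charFun]
  refine sum_congr rfl fun j hj => ?_
  by_cases hℓj : ℓ j = 0
  · simp [hℓj]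
  · rw [charFun_apply_eq_of_iff (hε j hj hℓj)]

theorem IsCircuitRelation.sum_sign_smul_Agamma_eq_zero (hpos : ∃ j ∈ τ, 0 < ℓ j)
    (hneg : ∃ k ∈ τ, ℓ k < 0) :
    ∑ j ∈ τ, (SignType.sign (ℓ j) : ℤ) • Agamma (τ.erase j) p = 0 := by
  funext h
  obtain ⟨ε, hgen, hval⟩ := ((hp.eventually_add_smul_sub h).and
    (hℓ.eventually_sum_sign_smul_Agamma_apply hτ hp h)).exists
  rw [hval, hℓ.sum_sign_mul_charFun_openCone_eq_zero hgen hpos hneg, Pi.zero_apply]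

theorem IsCircuitRelation.sum_sign_smul_Agamma_eq_charFun_locClosedCone
    (hnonneg : ∀ v ∈ τ, 0 ≤ ℓ v) {j₀ : E} (hj₀ : j₀ ∈ τ) (hℓj₀ : 0 < ℓ j₀) {q : E → ℝ}
    (hq : p = ∑ v ∈ τ.erase j₀, q v • v) :
    ∑ j ∈ τ, (SignType.sign (ℓ j) : ℤ) • Agamma (τ.erase j) p =
      charFun (locClosedCone (τ.erase j₀) (τ.filter (ℓ · = 0))
        ((τ.filter (ℓ · = 0)).filter (q · < 0))) := by
  funext h
  have hb := hℓ.linearIndepOn_erase hj₀ hℓj₀.ne'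
  obtain ⟨a, ha⟩ := exists_eq_sum_smul (hℓ.span_erase hτ hj₀ hℓj₀.ne') h
  have hZ : τ.filter (ℓ · = 0) ⊆ τ.erase j₀ := fun v hv =>
    mem_erase.2 ⟨by rintro rfl; exact hℓj₀.ne' (mem_filter.1 hv).2, (mem_filter.1 hv).1⟩
  obtain ⟨ε, ⟨hgen, hval⟩, hcoord⟩ := (((hp.eventually_add_smul_sub h).and
    (hℓ.eventually_sum_sign_smul_Agamma_apply hτ hp h)).and
    (eventually_mem_openConeOn_iff hb hZ ha hq fun v hv =>
      hp.coeff_ne_zero hj₀ hℓj₀.ne' hq v (hZ hv))).exists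
  rw [hval, hℓ.sum_sign_mul_charFun_openCone_eq_charFun hgen hnonneg hj₀ hℓj₀]
  exact charFun_apply_eq_of_iff (hcoord.trans (mem_locClosedCone_filter_iff hb hZ ha).symm)

end Agamma

def expansionRelation {G : Type*} (α : G) (c : G → ℝ) : G → ℝ :=
  fun v => if v = α then 1 else -c v

theorem expansionRelation_self {G : Type*} (α : G) (c : G → ℝ) : expansionRelation α c α = 1 :=
  if_pos rfl

theorem expansionRelation_of_mem {G : Type*} {σ : Finset G} {α β : G} (c : G → ℝ) (hασ : α ∉ σ)
    (hβ : β ∈ σ) : expansionRelation α c β = -c β :=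
  if_neg (ne_of_mem_of_not_mem hβ hασ)

theorem ite_pos_neg_eq_sign (x : ℝ) :
    (if 0 < x then (1 : ℤ) else if x < 0 then -1 else 0) = (SignType.sign x : ℤ) := by
  rw [sign_apply]
  split_ifs <;> simp

section Expansion

variable {σ : Finset E} {α : E} {c : E → ℝ}

theorem isCircuitRelation_expansionRelation (hσ : LinearIndepOn ℝ id (σ : Set E)) (hασ : α ∉ σ)
    (hc : ∑ β ∈ σ, c β • β = α) : IsCircuitRelation (insert α σ) (expansionRelation α c) := by
  have hsum : ∀ μ : E → ℝ, ∑ v ∈ insert α σ, μ v • v =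
      ∑ β ∈ σ, (μ α * c β + μ β) • β := fun μ => by
    rw [sum_insert hασ, ← hc, smul_sum]
    simp only [smul_smul, add_smul, sum_add_distrib]
  refine ⟨?_, fun μ hμ => ⟨μ α, fun v hv => ?_⟩⟩
  · rw [hsum, sum_eq_zero fun β hβ => by
      rw [expansionRelation_self, expansionRelation_of_mem c hασ hβ]; simp]
  · have hzero := linearIndepOn_finset_iff.1 hσ _ ((hsum μ).symm.trans hμ)
    rcases mem_insert.1 hv with rfl | hv
    · rw [expansionRelation_self, mul_one]
    · rw [expansionRelation_of_mem c hασ hv]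
      linarith [hzero v hv]

theorem Agamma_sub_sum_eq_sum_sign (hασ : α ∉ σ) (p : E) :
    Agamma σ p - ∑ β ∈ σ, (if 0 < c β then (1 : ℤ) else if c β < 0 then -1 else 0) •
        Agamma (insert α (σ.erase β)) p =
      ∑ j ∈ insert α σ, (SignType.sign (expansionRelation α c j) : ℤ) •
        Agamma ((insert α σ).erase j) p := by
  rw [sum_insert hασ, expansionRelation_self, sign_one, erase_insert hασ, SignType.coe_one,
    one_smul, sub_eq_add_neg, ← sum_neg_distrib]
  refine congrArg _ (sum_congr rfl fun β hβ => ?_)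
  rw [expansionRelation_of_mem c hασ hβ, Left.sign_neg, SignType.coe_neg, neg_smul,
    ite_pos_neg_eq_sign, erase_insert_of_ne (ne_of_mem_of_not_mem hβ hασ).symm]

end Expansion

theorem RegPtV.isGeneric {Δ σ : Finset E} {p α : E} {c : E → ℝ} (hp : RegPtV Δ p)
    (hσΔ : σ ⊆ Δ) (hα : α ∈ Δ) (hσ : LinearIndepOn ℝ id (σ : Set E))
    (hσs : span ℝ (σ : Set E) = ⊤) (hασ : α ∉ σ) (hc : ∑ β ∈ σ, c β • β = α) :
    IsGeneric (insert α σ) (expansionRelation α c) p := by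
  intro v hv hℓv w hw hwv
  have hind := ((isCircuitRelation_expansionRelation hσ hασ hc).linearIndepOn_erase hv
    hℓv).mono (coe_subset.2 (erase_subset w _))
  refine hp _ ⟨⟨_, (erase_subset _ _).trans ((erase_subset _ _).trans (insert_subset hα hσΔ)),
    rfl⟩, ?_⟩
  rw [finrank_span_finset_eq_card hind, card_erase_of_mem (mem_erase.2 ⟨hwv, hw⟩),
    card_erase_of_mem hv, card_insert_of_notMem hασ, ← finrank_top ℝ E, ← hσs,
    finrank_span_finset_eq_card hσ]
  omega

theorem filter_expansionRelation_eq_zero {G : Type*} {σ : Finset G} {α : G} (c : G → ℝ)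
    (hασ : α ∉ σ) : (insert α σ).filter (expansionRelation α c · = 0) = σ.filter (c · = 0) := by
  ext v
  by_cases hvα : v = α
  · subst hvα
    simp [expansionRelation_self, hασ]
  · rw [mem_filter, mem_filter, mem_insert, expansionRelation]
    simp [hvα]

theorem expansionRelation_nonneg {G : Type*} {σ : Finset G} {α : G} {c : G → ℝ} (hασ : α ∉ σ)
    (hc : ∀ β ∈ σ, c β ≤ 0) : ∀ v ∈ insert α σ, 0 ≤ expansionRelation α c v := by
  intro v hv
  rcases mem_insert.1 hv with rfl | hv
  · rw [expansionRelation_self]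
    exact zero_le_one
  · rw [expansionRelation_of_mem c hασ hv, neg_nonneg]
    exact hc v hv

theorem exists_ne_zero_of_sum_smul_eq {σ : Finset E} {c : E → ℝ} {α : E} (hα : α ≠ 0)
    (hc : ∑ β ∈ σ, c β • β = α) : ∃ β ∈ σ, c β ≠ 0 := by
  by_contra! hzero
  exact hα (hc ▸ sum_eq_zero fun β hβ => by rw [hzero β hβ, zero_smul])

theorem Agamma_mem_Ccone {Δ σ : Finset E} {p : E} (hσ : LinearIndepOn ℝ id (σ : Set E))
    (hσs : span ℝ (σ : Set E) = ⊤) (hσΔ : σ ⊆ Δ) (hsym : ∀ v ∈ Δ, -v ∈ Δ) {q : E → ℝ}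
    (hq : p = ∑ v ∈ σ, q v • v) (hq0 : ∀ v ∈ σ, q v ≠ 0) : Agamma σ p ∈ Ccone E Δ := by
  rw [Agamma_eq_charFun, primedCone_eq_locClosedCone hσ hσs hq hq0]
  exact charFun_locClosedCone_mem_Ccone hσ hσs subset_rfl (filter_subset _ _) hσΔ hsym

theorem statement19_general (V : Type) [AddCommGroup V] [Module ℝ V]
    (Δ : Finset V) (h0 : (0 : V) ∉ Δ)
    (hsym : ∀ α ∈ Δ, -α ∈ Δ)
    (p : V) (hp : RegPtV Δ p)
    (σ : Finset V) (hσΔ : σ ⊆ Δ)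
    (hσi : LinearIndependent ℝ (fun x : {y : V // y ∈ σ} => (x : V)))
    (hσs : Submodule.span ℝ (σ : Set V) = ⊤)
    (α : V) (hα : α ∈ Δ) (hασ : α ∉ σ)
    (c : V → ℝ) (hc : (∑ β ∈ σ, c β • β) = α) :
    Agamma σ p ∈ Ccone V Δ ∧
    (Agamma σ p - ∑ β ∈ σ,
        (if 0 < c β then (1 : ℤ) else if c β < 0 then -1 else 0) •
          Agamma (insert α (σ.erase β)) p) ∈ LCcone V Δ := by
  have hσ : LinearIndepOn ℝ id (σ : Set V) := hσi
  have hℓ := isCircuitRelation_expansionRelation hσ hασ hc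
  have hτ : span ℝ ((insert α σ : Finset V) : Set V) = ⊤ :=
    top_le_iff.1 (hσs ▸ span_mono (coe_subset.2 (subset_insert α σ)))
  have hgen := hp.isGeneric hσΔ hα hσ hσs hασ hc
  have hℓα : 0 < expansionRelation α c α := by rw [expansionRelation_self]; exact one_pos
  obtain ⟨q, hq⟩ := exists_eq_sum_smul hσs p
  have hqα : p = ∑ v ∈ (insert α σ).erase α, q v • v := by rwa [erase_insert hασ]
  have hq0 : ∀ v ∈ σ, q v ≠ 0 := by
    simpa only [erase_insert hασ] using hgen.coeff_ne_zero (mem_insert_self α σ) hℓα.ne' hqα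
  refine ⟨Agamma_mem_Ccone hσ hσs hσΔ hsym hq hq0, ?_⟩
  rw [Agamma_sub_sum_eq_sum_sign hασ]
  by_cases hpos : ∃ β ∈ σ, 0 < c β
  · obtain ⟨β, hβ, hcβ⟩ := hpos
    rw [hℓ.sum_sign_smul_Agamma_eq_zero hτ hgen ⟨α, mem_insert_self α σ, hℓα⟩
      ⟨β, mem_insert_of_mem hβ, by rw [expansionRelation_of_mem c hασ hβ]; linarith⟩]
    exact zero_mem _
  obtain ⟨β, hβ, hcβ⟩ := exists_ne_zero_of_sum_smul_eq (fun hα0 => h0 (hα0 ▸ hα)) hc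
  rw [hℓ.sum_sign_smul_Agamma_eq_charFun_locClosedCone hτ hgen
    (expansionRelation_nonneg hασ fun v hv => not_lt.1 fun hcv => hpos ⟨v, hv, hcv⟩)
    (mem_insert_self α σ) hℓα hqα, erase_insert hασ, filter_expansionRelation_eq_zero c hασ]
  exact charFun_locClosedCone_mem_LCcone hσ hσs (filter_subset _ _) (filter_subset _ _) hσΔ hsym
    hβ fun hβZ => hcβ (mem_filter.1 hβZ).2

/-- Let `V` be a real vector space of dimension `r` and `Δ ⊆ V ∖ {0}` a
finite spanning subset with `Δ = -Δ`.  Let `γ` be a chamber of `V` and `p ∈ γ` (a regular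
point; `C(σ)'_γ` depends only on the chamber `γ` of `p`).  Then for every basis `σ` of
`Δ` and every `α ∈ Δ ∖ σ` with expansion `α = Σ_{β ∈ σ} c_β β`, the family
`A_γ(σ) = [C(σ)'_γ]` satisfies the Orlik–Solomon relation
`A_γ(σ) ≡ Σ_{β ∈ σ, c_β ≠ 0} sign(c_β) A_γ(σ ∪ {α} ∖ {β})` modulo `ℒ𝒞_Δ`. -/
theorem statement19 (V : Type) [AddCommGroup V] [Module ℝ V] [FiniteDimensional ℝ V]
    (Δ : Finset V) (h0 : (0 : V) ∉ Δ)
    (hΔ : Submodule.span ℝ (Δ : Set V) = ⊤) (hsym : ∀ α ∈ Δ, -α ∈ Δ)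
    (p : V) (hp : RegPtV Δ p)
    (σ : Finset V) (hσΔ : σ ⊆ Δ)
    (hσi : LinearIndependent ℝ (fun x : {y : V // y ∈ σ} => (x : V)))
    (hσs : Submodule.span ℝ (σ : Set V) = ⊤)
    (α : V) (hα : α ∈ Δ) (hασ : α ∉ σ)
    (c : V → ℝ) (hc : (∑ β ∈ σ, c β • β) = α) :
    Agamma σ p ∈ Ccone V Δ ∧
    (Agamma σ p - ∑ β ∈ σ,
        (if 0 < c β then (1 : ℤ) else if c β < 0 then -1 else 0) •
          Agamma (insert α (σ.erase β)) p) ∈ LCcone V Δ :=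
  statement19_general V Δ h0 hsym p hp σ hσΔ hσi hσs α hα hασ c hc

end JK
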